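/- arXiv:2602.08120 — 2 statements merged into one kernel-verified Lean document; each statement's English description precedes it below -/
import Mathlib

section
/- If X_1, ..., X_n are independent real random variables with mean zero and p ∈ [1, 2], then E[|X_1 + ... + X_n|^p] ≤ 2 · Σ_{i=1}^n E[|X_i|^p] (von Bahr–Esseen inequality with constant 2). -/
open MeasureTheory ProbabilityTheory Finset

/-! For `1 ≤ p ≤ 2` one has the pointwise bound
`|x + y| ^ p ≤ |x| ^ p + p (|x| ^ p / x) y + 2 |y| ^ p`: a first-order expansion of `|·| ^ p` at
`x` with remainder at most `2 |y| ^ p`. By homogeneity it reduces to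
`|1 + t| ^ p ≤ 1 + p t + 2 |t| ^ p`, which for `|t| ≤ 1` comes from
`(1 + t) ^ p ≤ 1 + p t + (p - 1) t ^ 2` (weighted AM-GM between `1 + t` and `(1 + t) ^ 2`), for
`t ≥ 1` from the same bound at `1 / t`, and for `t ≤ -1` from Bernoulli's inequality.
Take `x = X₁ + ⋯ + Xₖ₋₁` and `y = Xₖ`: by independence and `E Xₖ = 0` the linear term has mean zero,
so `E |X₁ + ⋯ + Xₖ| ^ p ≤ E |X₁ + ⋯ + Xₖ₋₁| ^ p + 2 E |Xₖ| ^ p`, and the theorem follows by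
induction on `k`. -/

namespace Real

variable {p : ℝ}

lemma one_add_rpow_le_of_neg_one_le (hp1 : 1 ≤ p) (hp2 : p ≤ 2) {t : ℝ} (ht : -1 ≤ t) :
    (1 + t) ^ p ≤ 1 + p * t + (p - 1) * t ^ 2 := by
  have hx : 0 ≤ 1 + t := by linarith
  have key : (1 + t) ^ p ≤ (2 - p) * (1 + t) + (p - 1) * (1 + t) ^ 2 := by
    rcases hx.eq_or_lt with h0 | h0
    · rw [← h0, zero_rpow (by linarith)]
      simp
    calc (1 + t) ^ p = (1 + t) ^ (2 - p) * ((1 + t) ^ 2) ^ (p - 1) := by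
          rw [← rpow_natCast _ 2, ← rpow_mul hx, ← rpow_add h0]
          congr 1
          ring
      _ ≤ _ := geom_mean_le_arith_mean2_weighted (by linarith) (by linarith) hx
          (sq_nonneg _) (by ring)
  linarith

lemma abs_one_add_rpow_le (hp1 : 1 ≤ p) (hp2 : p ≤ 2) (t : ℝ) :
    |1 + t| ^ p ≤ 1 + p * t + 2 * |t| ^ p := by
  rcases le_or_gt |t| 1 with hle | hgt
  · obtain ⟨ht1, -⟩ := abs_le.1 hle
    have hsq : t ^ 2 ≤ |t| ^ p := by
      rw [← sq_abs, ← rpow_natCast]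
      exact rpow_le_rpow_of_exponent_ge' (abs_nonneg t) hle (by linarith) (by norm_num; linarith)
    rw [abs_of_nonneg (by linarith)]
    nlinarith [one_add_rpow_le_of_neg_one_le hp1 hp2 ht1, sq_nonneg t]
  rcases lt_abs.1 hgt with ht | ht
  · have ht0 : 0 < t := by linarith
    have hsq : t ^ p ≤ t ^ 2 := by
      rw [← rpow_natCast]
      exact rpow_le_rpow_of_exponent_le ht.le (by norm_num; linarith)
    have hbound := one_add_rpow_le_of_neg_one_le hp1 hp2
      (by linarith [inv_pos.2 ht0] : -1 ≤ t⁻¹)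
    have hsplit : (1 + t) ^ p = t ^ p * (1 + t⁻¹) ^ p := by
      rw [← mul_rpow ht0.le (by positivity), mul_add, mul_inv_cancel₀ ht0.ne', mul_one, add_comm]
    rw [abs_of_pos (by linarith), abs_of_pos ht0, hsplit]
    have htp : 1 ≤ t ^ p := one_le_rpow ht.le (by linarith)
    have h1 : t ^ p * t⁻¹ ≤ t := by
      calc t ^ p * t⁻¹ ≤ t ^ 2 * t⁻¹ := by gcongr
        _ = t := by field_simp
    have h2 : t ^ p * t⁻¹ ^ 2 ≤ 1 := by
      calc t ^ p * t⁻¹ ^ 2 ≤ t ^ 2 * t⁻¹ ^ 2 := by gcongr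
        _ = 1 := by field_simp
    calc t ^ p * (1 + t⁻¹) ^ p ≤ t ^ p * (1 + p * t⁻¹ + (p - 1) * t⁻¹ ^ 2) := by gcongr
      _ = t ^ p + p * (t ^ p * t⁻¹) + (p - 1) * (t ^ p * t⁻¹ ^ 2) := by ring
      _ ≤ 1 + p * t + 2 * t ^ p := by nlinarith
  · have hbern := one_add_mul_self_le_rpow_one_add (s := -t - 1) (by linarith) hp1
    have hmono : (-t - 1) ^ p ≤ (-t) ^ p := rpow_le_rpow (by linarith) (by linarith) (by linarith)
    rw [show 1 + (-t - 1) = -t by ring] at hbern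
    rw [abs_of_neg (by linarith), abs_of_neg (by linarith), show -(1 + t) = -t - 1 by ring]
    linarith

-- At `x = 0` the coefficient `|x| ^ p / x` is `0` by the convention `a / 0 = 0`.
lemma abs_add_rpow_le (hp1 : 1 ≤ p) (hp2 : p ≤ 2) (x y : ℝ) :
    |x + y| ^ p ≤ |x| ^ p + p * (|x| ^ p / x) * y + 2 * |y| ^ p := by
  rcases eq_or_ne x 0 with rfl | hx
  · simp only [zero_add, abs_zero, zero_rpow (by linarith : p ≠ 0), div_zero, mul_zero]
    linarith [rpow_nonneg (abs_nonneg y) p]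
  calc |x + y| ^ p = |x| ^ p * |1 + y / x| ^ p := by
        rw [← mul_rpow (abs_nonneg x) (abs_nonneg _), ← abs_mul, mul_add, mul_div_cancel₀ _ hx,
          mul_one]
    _ ≤ |x| ^ p * (1 + p * (y / x) + 2 * |y / x| ^ p) := by
        gcongr
        exact abs_one_add_rpow_le hp1 hp2 _
    _ = |x| ^ p + p * (|x| ^ p / x) * y + 2 * (|x| * |y / x|) ^ p := by
        rw [mul_rpow (abs_nonneg x) (abs_nonneg _)]
        ring
    _ = |x| ^ p + p * (|x| ^ p / x) * y + 2 * |y| ^ p := by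
        rw [← abs_mul, mul_div_cancel₀ _ hx]

lemma abs_rpow_div_self_le (hp1 : 1 ≤ p) (x : ℝ) : |(|x| ^ p / x)| ≤ 1 + |x| ^ p := by
  have hxp : 0 ≤ |x| ^ p := rpow_nonneg (abs_nonneg x) p
  rw [abs_div, abs_of_nonneg hxp]
  rcases le_or_gt |x| 1 with hle | hgt
  · have : |x| ^ p / |x| ≤ 1 := div_le_one_of_le₀ (rpow_le_self_of_le_one (abs_nonneg x) hle hp1)
      (abs_nonneg x)
    linarith
  · have : |x| ^ p / |x| ≤ |x| ^ p := div_le_self hxp hgt.le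
    linarith

end Real

section VonBahrEsseen

variable {Ω : Type*} [MeasurableSpace Ω] {μ : Measure Ω} {p : ℝ}

lemma MeasureTheory.MemLp.integrable_abs_rpow {f : Ω → ℝ} (hp : 0 < p)
    (hf : MemLp f (ENNReal.ofReal p) μ) :
    Integrable (fun ω => |f ω| ^ p) μ := by
  simpa [ENNReal.toReal_ofReal hp.le] using
    hf.integrable_norm_rpow (by simpa using hp) ENNReal.ofReal_ne_top

lemma ProbabilityTheory.IndepFun.integral_abs_add_rpow_le [IsFiniteMeasure μ] {S Y : Ω → ℝ}
    (hSY : IndepFun S Y μ) (hY0 : ∫ ω, Y ω ∂μ = 0) (hp1 : 1 ≤ p) (hp2 : p ≤ 2)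
    (hS : MemLp S (ENNReal.ofReal p) μ) (hY : MemLp Y (ENNReal.ofReal p) μ) :
    ∫ ω, |S ω + Y ω| ^ p ∂μ ≤ ∫ ω, |S ω| ^ p ∂μ + 2 * ∫ ω, |Y ω| ^ p ∂μ := by
  have hp0 : 0 < p := by linarith
  set φ : ℝ → ℝ := fun x => |x| ^ p / x
  have hφ : Measurable φ := by fun_prop
  have hφS : Integrable (fun ω => φ (S ω)) μ :=
    ((integrable_const 1).add (hS.integrable_abs_rpow hp0)).mono'
      (hφ.comp_aemeasurable hS.aemeasurable).aestronglyMeasurable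
      (ae_of_all _ fun ω => Real.abs_rpow_div_self_le hp1 (S ω))
  have hYint : Integrable Y μ := hY.integrable (ENNReal.one_le_ofReal.2 hp1)
  have hφSY : IndepFun (fun ω => φ (S ω)) Y μ := hSY.comp hφ measurable_id
  have hcross_int : Integrable (fun ω => φ (S ω) * Y ω) μ := hφSY.integrable_mul hφS hYint
  have hcross : ∫ ω, φ (S ω) * Y ω ∂μ = 0 := by
    rw [hφSY.integral_fun_mul_eq_mul_integral hφS.aestronglyMeasurable hYint.aestronglyMeasurable,
      hY0, mul_zero]
  have hSint := hS.integrable_abs_rpow hp0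
  have hYpint := hY.integrable_abs_rpow hp0
  calc ∫ ω, |S ω + Y ω| ^ p ∂μ
      ≤ ∫ ω, (|S ω| ^ p + p * (φ (S ω) * Y ω) + 2 * |Y ω| ^ p) ∂μ := by
        refine integral_mono ((hS.add hY).integrable_abs_rpow hp0)
          ((hSint.add (hcross_int.const_mul p)).add (hYpint.const_mul 2)) fun ω => ?_
        simpa only [φ, mul_assoc] using Real.abs_add_rpow_le hp1 hp2 (S ω) (Y ω)
    _ = ∫ ω, |S ω| ^ p ∂μ + 2 * ∫ ω, |Y ω| ^ p ∂μ := by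
        rw [integral_add (f := fun ω => |S ω| ^ p + p * (φ (S ω) * Y ω))
            (hSint.add (hcross_int.const_mul p)) (hYpint.const_mul 2),
          integral_add hSint (hcross_int.const_mul p), integral_const_mul, integral_const_mul,
          hcross, mul_zero, add_zero]

lemma ProbabilityTheory.iIndepFun.integral_abs_sum_rpow_le [IsFiniteMeasure μ] {ι : Type*}
    {X : ι → Ω → ℝ} (hindep : iIndepFun X μ) (hmean : ∀ i, ∫ ω, X i ω ∂μ = 0)
    (hp1 : 1 ≤ p) (hp2 : p ≤ 2)
    (hX : ∀ i, MemLp (X i) (ENNReal.ofReal p) μ) (s : Finset ι) :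
    ∫ ω, |∑ i ∈ s, X i ω| ^ p ∂μ ≤ 2 * ∑ i ∈ s, ∫ ω, |X i ω| ^ p ∂μ := by
  classical
  induction s using Finset.induction_on with
  | empty => simp [Real.zero_rpow (by linarith : p ≠ 0)]
  | insert j s hj ih =>
    have hsum : IndepFun (fun ω => ∑ i ∈ s, X i ω) (X j) μ := by
      simpa only [← Finset.sum_apply] using
        hindep.indepFun_finsetSum_of_notMem₀ (fun i => (hX i).aemeasurable) hj
    have hstep := hsum.integral_abs_add_rpow_le (hmean j) hp1 hp2
      (by simpa only [← Finset.sum_apply] using memLp_finsetSum s fun i _ => hX i) (hX j)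
    simp only [sum_insert hj, add_comm (X j _)]
    linarith

end VonBahrEsseen

/-- von Bahr–Esseen inequality with constant 2: if `X 1, ..., X n` are independent real random
variables with mean zero and `p ∈ [1,2]`, then
`E[|X_1 + ... + X_n|^p] ≤ 2 * ∑ i, E[|X_i|^p]`. -/
theorem von_bahr_esseen {Ω : Type*} [MeasurableSpace Ω] (μ : Measure Ω)
    [IsProbabilityMeasure μ] (n : ℕ) (X : Fin n → Ω → ℝ)
    (hindep : iIndepFun X μ)
    (hmean : ∀ i, ∫ ω, X i ω ∂μ = 0)
    (p : ℝ) (hp1 : 1 ≤ p) (hp2 : p ≤ 2)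
    (hX : ∀ i, MemLp (X i) (ENNReal.ofReal p) μ) :
    ∫ ω, |∑ i, X i ω| ^ p ∂μ ≤ 2 * ∑ i, ∫ ω, |X i ω| ^ p ∂μ :=
  hindep.integral_abs_sum_rpow_le hmean hp1 hp2 hX univ
end

section
/- Let C : (0,1) → ℝ_{≥0} satisfy, for constants K, L ≥ 1, q ∈ ℕ, and for all ε ∈ (0, 1/2): C(ε) ≤ K · Σ_{n=0}^{B} (2^{−n/2}·B/ε)·log(B/ε) · [C(2^{−n/2}) + C(2^{−(n−1)/2})], where B = 2·log₂(L/ε), and suppose C(η) ≤ K·η^{−1}·log^{1+3q}(η^{−1} + 2) for all η ∈ (0,1). Then there exists a constant K' such that C'(ε) := the right-hand side satisfies C'(ε) ≤ K'·ε^{−1}·log^{3(q+1)+1}(ε^{−1} + 2) for all ε ∈ (0, 1/2). -/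
open Real Finset

/-!
The factor `2^(-n/2)` cancels the `η⁻¹` in the bound for `C` at `η = 2^(-n/2)` and
`η = 2^(-(n-1)/2)`, so each level contributes `O(log^(1+3q)(2^(n/2) + 2))` times `(B/ε)·log(B/ε)`.
Since `2^(B/2) = L/ε`, every logarithm that appears, as well as `B`, `log(B/ε)` and the number
`⌊B⌋ + 1` of levels, is `O(log(ε⁻¹ + 2))`; this accounts for the three extra logarithms.
-/

lemma one_le_log_add_two {x : ℝ} (hx : 1 ≤ x) : 1 ≤ log (x + 2) := by
  rw [le_log_iff_exp_le (by linarith)]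
  linarith [exp_one_lt_d9]

lemma log_le_mul_log_inv_add_two {L ε y : ℝ} (hL : 1 ≤ L) (hε : 0 < ε) (hε1 : ε ≤ 1)
    (hy : 0 < y) (hyL : y ≤ L * (ε⁻¹ + 2)) :
    log y ≤ (log L + 1) * log (ε⁻¹ + 2) := by
  have hΛ : 1 ≤ log (ε⁻¹ + 2) := one_le_log_add_two (one_le_inv₀ hε |>.mpr hε1)
  calc log y ≤ log (L * (ε⁻¹ + 2)) := log_le_log hy hyL
    _ = log L + log (ε⁻¹ + 2) := log_mul (by positivity) (by positivity)
    _ ≤ (log L + 1) * log (ε⁻¹ + 2) := by nlinarith [log_nonneg hL]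

lemma two_le_two_mul_logb {L ε : ℝ} (hL : 1 ≤ L) (hε : 0 < ε) (hε2 : ε < 1 / 2) :
    2 ≤ 2 * logb 2 (L / ε) := by
  have : (2 : ℝ) ^ (1 : ℝ) ≤ L / ε := by
    rw [rpow_one, le_div_iff₀ hε]
    linarith
  linarith [(le_logb_iff_rpow_le one_lt_two (by positivity)).2 this]

lemma two_mul_logb_le {L ε : ℝ} (hL : 1 ≤ L) (hε : 0 < ε) (hε1 : ε ≤ 1) :
    2 * logb 2 (L / ε) ≤ 2 / log 2 * (log L + 1) * log (ε⁻¹ + 2) := by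
  have hlog : log (L / ε) ≤ (log L + 1) * log (ε⁻¹ + 2) :=
    log_le_mul_log_inv_add_two hL hε hε1 (by positivity) (by
      rw [div_eq_mul_inv]
      gcongr
      linarith)
  calc 2 * logb 2 (L / ε) = 2 / log 2 * log (L / ε) := by rw [logb]; ring
    _ ≤ 2 / log 2 * ((log L + 1) * log (ε⁻¹ + 2)) := by gcongr
    _ = 2 / log 2 * (log L + 1) * log (ε⁻¹ + 2) := (mul_assoc _ _ _).symm

lemma log_div_le_add_one_mul {B ε a : ℝ} (hB : 0 < B) (hε : 0 < ε)
    (hBa : B ≤ a * log (ε⁻¹ + 2)) : log (B / ε) ≤ (a + 1) * log (ε⁻¹ + 2) := by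
  have hlogε : -log ε ≤ log (ε⁻¹ + 2) := by
    rw [← log_inv]
    exact log_le_log (by positivity) (by linarith)
  rw [log_div hB.ne' hε.ne']
  linarith [log_le_self hB.le]

lemma inv_mul_add_le {C : ℝ → ℝ} {K : ℝ} {p : ℕ} (hK : 0 ≤ K)
    (hC : ∀ η : ℝ, 0 < η → C η ≤ K * η⁻¹ * log (η⁻¹ + 2) ^ p) {a b Λ : ℝ} (hb : 0 < b)
    (hba : b ≤ a) (hlog : log (a + 2) ≤ Λ) :
    a⁻¹ * (C a⁻¹ + C b⁻¹) ≤ 2 * K * Λ ^ p := by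
  have ha : 0 < a := hb.trans_le hba
  have hΛ : 0 ≤ Λ := (log_nonneg (by linarith)).trans hlog
  have hCΛ : ∀ c, 0 < c → c ≤ a → C c⁻¹ ≤ K * a * Λ ^ p := fun c hc hca ↦
    calc C c⁻¹ ≤ K * c * log (c + 2) ^ p := by simpa only [inv_inv] using hC c⁻¹ (inv_pos.2 hc)
      _ ≤ K * a * Λ ^ p := by
        have hlog_c : log (c + 2) ≤ Λ := (log_le_log (by positivity) (by linarith)).trans hlog
        have hlog_c0 : 0 ≤ log (c + 2) := log_nonneg (by linarith)
        gcongr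
  calc a⁻¹ * (C a⁻¹ + C b⁻¹) ≤ a⁻¹ * (K * a * Λ ^ p + K * a * Λ ^ p) := by
        gcongr
        exacts [hCΛ a ha le_rfl, hCΛ b hb hba]
    _ = 2 * K * Λ ^ p := by field_simp; ring

lemma level_cost_le {C : ℝ → ℝ} {K L ε : ℝ} {p : ℕ} (hK : 0 ≤ K)
    (hC : ∀ η : ℝ, 0 < η → C η ≤ K * η⁻¹ * log (η⁻¹ + 2) ^ p) (hL : 1 ≤ L) (hε : 0 < ε)
    (hε1 : ε ≤ 1) {x : ℝ} (hx : x ≤ 2 * logb 2 (L / ε)) :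
    (2 : ℝ) ^ (-x / 2) * (C (2 ^ (-x / 2)) + C (2 ^ (-(x - 1) / 2))) ≤
      2 * K * ((log L + 1) * log (ε⁻¹ + 2)) ^ p := by
  have hxL : (2 : ℝ) ^ (x / 2) ≤ L / ε :=
    (le_logb_iff_rpow_le one_lt_two (by positivity)).1 (by linarith)
  simp only [neg_div, rpow_neg zero_le_two]
  refine inv_mul_add_le hK hC (by positivity)
    (rpow_le_rpow_of_exponent_le one_le_two (by linarith))
    (log_le_mul_log_inv_add_two hL hε hε1 (by positivity) ?_)
  rw [mul_add, ← div_eq_mul_inv]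
  linarith

theorem cost_recursion_general (K L : ℝ) (hK : 1 ≤ K) (hL : 1 ≤ L) (q : ℕ)
    (C : ℝ → ℝ)
    (hC : ∀ η : ℝ, 0 < η → C η ≤ K * η⁻¹ * (Real.log (η⁻¹ + 2)) ^ (1 + 3 * q)) :
    ∃ K' : ℝ, ∀ ε ∈ Set.Ioo (0 : ℝ) (1 / 2), ∀ B : ℝ, B = 2 * Real.logb 2 (L / ε) →
      K * ∑ n ∈ Finset.range (⌊B⌋₊ + 1),
          ((2 : ℝ) ^ (-(n : ℝ) / 2) * B / ε) * Real.log (B / ε) *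
            (C ((2 : ℝ) ^ (-(n : ℝ) / 2)) + C ((2 : ℝ) ^ (-((n : ℝ) - 1) / 2))) ≤
        K' * ε⁻¹ * (Real.log (ε⁻¹ + 2)) ^ (3 * (q + 1) + 1) := by
  set M := log L + 1
  set a := 2 / log 2 * M
  have hM : 1 ≤ M := by linarith [log_nonneg hL]
  have ha : 0 < a := by positivity
  refine ⟨2 * K ^ 2 * (a + 1) ^ 3 * M ^ (1 + 3 * q), ?_⟩
  rintro ε ⟨hε, hε2⟩ B hB
  have hε1 : ε ≤ 1 := by linarith
  set Λ := log (ε⁻¹ + 2)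
  have hΛ : 1 ≤ Λ := one_le_log_add_two (one_le_inv₀ hε |>.mpr hε1)
  have hB2 : 2 ≤ B := hB ▸ two_le_two_mul_logb hL hε hε2
  have hBΛ : B ≤ a * Λ := hB ▸ two_mul_logb_le hL hε hε1
  have hlogB : log (B / ε) ≤ (a + 1) * Λ := log_div_le_add_one_mul (by linarith) hε hBΛ
  have hlogB0 : 0 ≤ log (B / ε) := log_nonneg (by rw [le_div_iff₀ hε]; linarith)
  have hlevels := sum_le_card_nsmul (range (⌊B⌋₊ + 1)) _ (2 * K * (M * Λ) ^ (1 + 3 * q))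
    fun n hn ↦ level_cost_le (by linarith) hC hL hε hε1 <| hB ▸
      (Nat.le_floor_iff (by linarith)).1 (mem_range_succ_iff.1 hn)
  rw [card_range, nsmul_eq_mul, Nat.cast_add_one] at hlevels
  have hcard : (⌊B⌋₊ : ℝ) + 1 ≤ (a + 1) * Λ := by linarith [Nat.floor_le (by linarith : 0 ≤ B)]
  clear_value M a Λ
  calc K * ∑ n ∈ range (⌊B⌋₊ + 1), ((2 : ℝ) ^ (-(n : ℝ) / 2) * B / ε) * log (B / ε) *
          (C (2 ^ (-(n : ℝ) / 2)) + C (2 ^ (-((n : ℝ) - 1) / 2)))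
        = K * (B / ε * log (B / ε) * ∑ n ∈ range (⌊B⌋₊ + 1), (2 : ℝ) ^ (-(n : ℝ) / 2) *
          (C (2 ^ (-(n : ℝ) / 2)) + C (2 ^ (-((n : ℝ) - 1) / 2)))) := by
        congr 1
        rw [mul_sum]
        exact sum_congr rfl fun n _ ↦ by ring
    _ ≤ K * (B / ε * log (B / ε) * ((a + 1) * Λ * (2 * K * (M * Λ) ^ (1 + 3 * q)))) := by
        gcongr K * (_ * ?_)
        exact hlevels.trans (by gcongr)
    _ ≤ K * ((a + 1) * Λ / ε * ((a + 1) * Λ) *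
          ((a + 1) * Λ * (2 * K * (M * Λ) ^ (1 + 3 * q)))) := by
        gcongr
        linarith
    _ = 2 * K ^ 2 * (a + 1) ^ 3 * M ^ (1 + 3 * q) * ε⁻¹ * Λ ^ (3 * (q + 1) + 1) := by ring

/-- Cost recursion of the deterministic-level quantum MLMC algorithm: if
`C η ≤ K·η⁻¹·log^(1+3q)(η⁻¹+2)`, then the right-hand side of the cost recursion,
`K·∑_{n=0}^{B} (2^(-n/2)·B/ε)·log(B/ε)·[C(2^(-n/2)) + C(2^(-(n-1)/2))]` with
`B = 2·log₂(L/ε)`, is at most `K'·ε⁻¹·log^(3(q+1)+1)(ε⁻¹+2)` for some constant `K'`. -/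
theorem cost_recursion (K L : ℝ) (hK : 1 ≤ K) (hL : 1 ≤ L) (q : ℕ)
    (C : ℝ → ℝ) (hC0 : ∀ η, 0 ≤ C η)
    (hC : ∀ η : ℝ, 0 < η → C η ≤ K * η⁻¹ * (Real.log (η⁻¹ + 2)) ^ (1 + 3 * q)) :
    ∃ K' : ℝ, ∀ ε ∈ Set.Ioo (0 : ℝ) (1 / 2), ∀ B : ℝ, B = 2 * Real.logb 2 (L / ε) →
      K * ∑ n ∈ Finset.range (⌊B⌋₊ + 1),
          ((2 : ℝ) ^ (-(n : ℝ) / 2) * B / ε) * Real.log (B / ε) *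
            (C ((2 : ℝ) ^ (-(n : ℝ) / 2)) + C ((2 : ℝ) ^ (-((n : ℝ) - 1) / 2))) ≤
        K' * ε⁻¹ * (Real.log (ε⁻¹ + 2)) ^ (3 * (q + 1) + 1) :=
  cost_recursion_general K L hK hL q C hC
end
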